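/- Let ψ₀, ψ₁ ∈ ℂ^M be orthonormal vectors, let e₀, e₁ be the standard basis of ℂ², and set Ψ = (e₀ ⊗ ψ₀ + e₁ ⊗ ψ₁)/√2 ∈ ℂ² ⊗ ℂ^M. Let Z = diag(1, −1) on ℂ², let M be a Hermitian M×M matrix, and define c = ⟨Ψ, (Z ⊗ M)Ψ⟩ − ⟨Ψ, (Z ⊗ I)Ψ⟩·⟨Ψ, (I ⊗ M)Ψ⟩. Then for every Hermitian matrix X on ℂ^M satisfying X ψ₀ = ψ₁ and X ψ₁ = ψ₀: ⟨ψ₁, (X M − M X) ψ₀⟩ = 2c. -/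

import Mathlib

/-!
Writing `Ψ = (e₀ ⊗ ψ₀ + e₁ ⊗ ψ₁)/√2`, the expectation of `A ⊗ B` is
`½ ∑ᵢⱼ Aᵢⱼ ⟨ψᵢ, B ψⱼ⟩`. Since `Z` is diagonal with `⟨Z⟩ = (‖ψ₀‖² − ‖ψ₁‖²)/2 = 0`, the connected
correlator reduces to `c = (⟨ψ₀, M ψ₀⟩ − ⟨ψ₁, M ψ₁⟩)/2`. On the other hand, because `X` is
Hermitian and swaps `ψ₀` and `ψ₁`, `⟨ψ₁, X M ψ₀⟩ = ⟨X ψ₁, M ψ₀⟩ = ⟨ψ₀, M ψ₀⟩` and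
`⟨ψ₁, M X ψ₀⟩ = ⟨ψ₁, M ψ₁⟩`.
-/

open Matrix
open scoped Kronecker

noncomputable def PsiVec (M : ℕ) (ψ₀ ψ₁ : Fin M → ℂ) : Fin 2 × Fin M → ℂ :=
  fun p => (if p.1 = 0 then ψ₀ p.2 else ψ₁ p.2) / (Real.sqrt 2 : ℂ)

noncomputable def Zmat : Matrix (Fin 2) (Fin 2) ℂ := !![1, 0; 0, -1]

theorem star_uncurry_dotProduct_kronecker_mulVec {R ι κ : Type*} [CommSemiring R] [StarRing R]
    [Fintype ι] [Fintype κ] (A : Matrix ι ι R) (B : Matrix κ κ R) (φ : ι → κ → R) :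
    star (Function.uncurry φ) ⬝ᵥ ((A ⊗ₖ B) *ᵥ Function.uncurry φ)
      = ∑ i, ∑ j, A i j * (star (φ i) ⬝ᵥ (B *ᵥ φ j)) := by
  simp only [dotProduct, mulVec, kroneckerMap_apply, Fintype.sum_prod_type, Pi.star_apply,
    Function.uncurry_apply_pair, Finset.mul_sum]
  rw [Finset.sum_congr rfl fun i _ => Finset.sum_comm]
  refine Finset.sum_congr rfl fun i _ => Finset.sum_congr rfl fun j _ =>
    Finset.sum_congr rfl fun k _ => Finset.sum_congr rfl fun l _ => by ring

theorem psiVec_eq_smul_uncurry (M : ℕ) (ψ₀ ψ₁ : Fin M → ℂ) :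
    PsiVec M ψ₀ ψ₁ = (Real.sqrt 2 : ℂ)⁻¹ • Function.uncurry ![ψ₀, ψ₁] := by
  funext ⟨i, k⟩
  fin_cases i <;> simp [PsiVec, div_eq_inv_mul]

theorem star_psiVec_dotProduct_kronecker_mulVec (M : ℕ) (ψ₀ ψ₁ : Fin M → ℂ)
    (A : Matrix (Fin 2) (Fin 2) ℂ) (B : Matrix (Fin M) (Fin M) ℂ) :
    star (PsiVec M ψ₀ ψ₁) ⬝ᵥ ((A ⊗ₖ B) *ᵥ PsiVec M ψ₀ ψ₁)
      = (∑ i, ∑ j, A i j * (star (![ψ₀, ψ₁] i) ⬝ᵥ (B *ᵥ ![ψ₀, ψ₁] j))) / 2 := by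
  have hsqrt : (Real.sqrt 2 : ℂ) * (Real.sqrt 2 : ℂ) = 2 := by
    exact_mod_cast Real.mul_self_sqrt zero_le_two
  rw [psiVec_eq_smul_uncurry, star_smul, mulVec_smul, smul_dotProduct, dotProduct_smul,
    star_uncurry_dotProduct_kronecker_mulVec, smul_smul, smul_eq_mul, star_inv₀,
    Complex.star_def, Complex.conj_ofReal, ← mul_inv, hsqrt, div_eq_inv_mul]

theorem star_psiVec_dotProduct_zmat_kronecker_mulVec (M : ℕ) (ψ₀ ψ₁ : Fin M → ℂ)
    (B : Matrix (Fin M) (Fin M) ℂ) :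
    star (PsiVec M ψ₀ ψ₁) ⬝ᵥ ((Zmat ⊗ₖ B) *ᵥ PsiVec M ψ₀ ψ₁)
      = (star ψ₀ ⬝ᵥ (B *ᵥ ψ₀) - star ψ₁ ⬝ᵥ (B *ᵥ ψ₁)) / 2 := by
  rw [star_psiVec_dotProduct_kronecker_mulVec]
  simp [Fin.sum_univ_two, Zmat, sub_eq_add_neg]

theorem star_dotProduct_commutator_mulVec_of_swap {R n : Type*} [CommRing R] [StarRing R]
    [Fintype n] {X : Matrix n n R} (hX : X.IsHermitian) {ψ₀ ψ₁ : n → R}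
    (hX₀ : X *ᵥ ψ₀ = ψ₁) (hX₁ : X *ᵥ ψ₁ = ψ₀) (A : Matrix n n R) :
    star ψ₁ ⬝ᵥ ((X * A - A * X) *ᵥ ψ₀) = star ψ₀ ⬝ᵥ (A *ᵥ ψ₀) - star ψ₁ ⬝ᵥ (A *ᵥ ψ₁) := by
  have hψ₁X : star ψ₁ ᵥ* X = star ψ₀ := by
    rw [← hX.eq, ← star_mulVec, hX₁]
  rw [sub_mulVec, dotProduct_sub, ← mulVec_mulVec, ← mulVec_mulVec, dotProduct_mulVec, hψ₁X, hX₀]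

theorem nonzero_correlator_obstructs_ghosts
    (M : ℕ) (ψ₀ ψ₁ : Fin M → ℂ)
    (h00 : star ψ₀ ⬝ᵥ ψ₀ = 1) (h11 : star ψ₁ ⬝ᵥ ψ₁ = 1)
    (Mm : Matrix (Fin M) (Fin M) ℂ)
    (c : ℂ)
    (hc : c = star (PsiVec M ψ₀ ψ₁) ⬝ᵥ ((Zmat ⊗ₖ Mm) *ᵥ PsiVec M ψ₀ ψ₁)
        - (star (PsiVec M ψ₀ ψ₁) ⬝ᵥ
            ((Zmat ⊗ₖ (1 : Matrix (Fin M) (Fin M) ℂ)) *ᵥ PsiVec M ψ₀ ψ₁))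
          * (star (PsiVec M ψ₀ ψ₁) ⬝ᵥ
            (((1 : Matrix (Fin 2) (Fin 2) ℂ) ⊗ₖ Mm) *ᵥ PsiVec M ψ₀ ψ₁))) :
    ∀ X : Matrix (Fin M) (Fin M) ℂ, X.IsHermitian →
      X *ᵥ ψ₀ = ψ₁ → X *ᵥ ψ₁ = ψ₀ →
      star ψ₁ ⬝ᵥ ((X * Mm - Mm * X) *ᵥ ψ₀) = 2 * c := by
  intro X hX hX₀ hX₁
  rw [star_dotProduct_commutator_mulVec_of_swap hX hX₀ hX₁, hc,
    star_psiVec_dotProduct_zmat_kronecker_mulVec, star_psiVec_dotProduct_zmat_kronecker_mulVec,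
    one_mulVec, one_mulVec, h00, h11]
  ring
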